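/- arXiv:2307.12212 — 2 statements merged into one kernel-verified Lean document; each statement's English description precedes it below -/
import Mathlib

section
/- For all keys x, y ∈ {0,1}^256 and every natural number l ≤ 256, the common prefix length of x and y is at least l if and only if the XOR distance between x and y is strictly less than 2^(256−l). -/
/-- The common prefix length of two keys in `{0,1}^n`: the number of leading bits
(indexed from the most significant bit) on which they agree. -/
def cpl {n : ℕ} (x y : BitVec n) : ℕ :=
  ((List.range n).takeWhile (fun i => x.getMsbD i == y.getMsbD i)).length

/-- The XOR distance between two keys: their bitwise XOR interpreted as a natural number. -/
def xorDist {n : ℕ} (x y : BitVec n) : ℕ := (x ^^^ y).toNat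

/-!
Both sides say that the `l` most significant bits of `x ^^^ y` vanish: for the common prefix
length by definition, and for the XOR distance because a natural number is below `2 ^ (n - l)`
exactly when all its bits from position `n - l` on are zero.
-/

theorem List.le_length_takeWhile_iff {α : Type*} {p : α → Bool} {l : List α} {k : ℕ}
    (hk : k ≤ l.length) :
    k ≤ (l.takeWhile p).length ↔ ∀ (i : ℕ) (hi : i < k), p (l[i]'(by omega)) = true := by
  induction l generalizing k with
  | nil =>
    obtain rfl : k = 0 := by simpa using hk
    simp
  | cons a l ih =>
    cases k with
    | zero => simp
    | succ k =>
      have hk' : k ≤ l.length := by simpa using hk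
      by_cases ha : p a = true
      · simp only [takeWhile_cons_of_pos ha, length_cons, Nat.add_le_add_iff_right, ih hk']
        refine ⟨fun h i hi => ?_, fun h i hi => by simpa using h (i + 1) (by omega)⟩
        cases i with
        | zero => simpa using ha
        | succ i => simpa using h i (by omega)
      · simp only [takeWhile_cons_of_neg ha, length_nil, Nat.le_zero, Nat.add_one_ne_zero,
          false_iff, not_forall]
        exact ⟨0, by omega, by simpa using ha⟩

theorem Nat.lt_two_pow_iff_testBit_eq_false {z k : ℕ} :
    z < 2 ^ k ↔ ∀ i, k ≤ i → z.testBit i = false :=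
  ⟨fun h _ hi => Nat.testBit_lt_two_pow (h.trans_le (Nat.pow_le_pow_right two_pos hi)),
    Nat.lt_pow_two_of_testBit z⟩

theorem BitVec.toNat_lt_two_pow_sub_iff {w l : ℕ} (x : BitVec w) (hl : l ≤ w) :
    x.toNat < 2 ^ (w - l) ↔ ∀ i < l, x.getMsbD i = false := by
  simp only [Nat.lt_two_pow_iff_testBit_eq_false, BitVec.testBit_toNat]
  constructor
  · intro h i hi
    simp [getMsbD_eq_getLsbD, h (w - 1 - i) (by omega)]
  · intro h j hj
    by_cases hjw : j < w
    · simp [getLsbD_eq_getMsbD, h (w - 1 - j) (by omega)]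
    · exact getLsbD_of_ge x j (by omega)

theorem le_cpl_iff {n l : ℕ} (x y : BitVec n) (hl : l ≤ n) :
    l ≤ cpl x y ↔ ∀ i < l, x.getMsbD i = y.getMsbD i := by
  simp [cpl, List.le_length_takeWhile_iff (p := fun i => x.getMsbD i == y.getMsbD i)
    (l := List.range n) (by simpa using hl)]

theorem le_cpl_iff_xorDist_lt {n l : ℕ} (x y : BitVec n) (hl : l ≤ n) :
    l ≤ cpl x y ↔ xorDist x y < 2 ^ (n - l) := by
  rw [le_cpl_iff x y hl, xorDist, BitVec.toNat_lt_two_pow_sub_iff _ hl]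
  simp

/-- For all keys `x, y ∈ {0,1}^256` and every `l ≤ 256`, the common prefix length of `x`
and `y` is at least `l` iff the XOR distance between `x` and `y` is less than `2^(256-l)`. -/
theorem cpl_ge_iff_xorDist_lt (x y : BitVec 256) (l : ℕ) (hl : l ≤ 256) :
    l ≤ cpl x y ↔ xorDist x y < 2 ^ (256 - l) :=
  le_cpl_iff_xorDist_lt x y hl
end

section
/- Let P be a finite set of pairwise distinct keys in {0,1}^256 with |P| ≥ k, fix a key, and let S be the set of the k elements of P with smallest XOR distance to key. Let CPL := min_{p ∈ S} cpl(p, key). Then every p ∈ P with cpl(p, key) ≥ CPL + 1 belongs to S. -/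
/-!
A key sharing a strictly longer prefix with `key` is strictly closer to it: if `x` first
disagrees with `key` at bit `c` (counted from the top), then `x ⊕ key` has that bit set, so it
is at least `2 ^ (n - 1 - c)`, while `y ⊕ key` vanishes on the top `c + 1` bits and is smaller.
Now take `q ∈ S` of minimal common prefix length; a `p ∉ S` with a longer common prefix would
be closer to `key` than `q`, contradicting the choice of `S`.
-/

namespace BitVec

theorem toNat_lt_two_pow_of_getMsbD_eq_false {n m : ℕ} {b : BitVec n}
    (h : ∀ i < m, b.getMsbD i = false) : b.toNat < 2 ^ (n - m) := by
  refine Nat.lt_pow_two_of_testBit _ fun i hi => ?_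
  rw [testBit_toNat, getLsbD_eq_getMsbD]
  by_cases hin : i < n
  · simp [hin, h (n - 1 - i) (by omega)]
  · simp [hin]

theorem two_pow_le_toNat_of_getMsbD_eq_true {n i : ℕ} {b : BitVec n}
    (h : b.getMsbD i = true) : 2 ^ (n - 1 - i) ≤ b.toNat := by
  have hi := lt_of_getMsbD h
  rw [getMsbD_eq_getElem b i hi] at h
  exact two_pow_le_toNat_of_getElem_eq_true (by omega) h

end BitVec

section Cpl

variable {n : ℕ} {x y z : BitVec n}

theorem cpl_eq_findIdx (x y : BitVec n) :
    cpl x y = (List.range n).findIdx fun i => x.getMsbD i != y.getMsbD i := by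
  rw [cpl, List.takeWhile_eq_take_findIdx_not, List.length_take, List.length_range]
  exact min_eq_left (List.findIdx_le_length.trans_eq List.length_range)

theorem cpl_le (x y : BitVec n) : cpl x y ≤ n :=
  (cpl_eq_findIdx x y).trans_le (List.findIdx_le_length.trans_eq List.length_range)

theorem getMsbD_eq_of_lt_cpl {i : ℕ} (h : i < cpl x y) : x.getMsbD i = y.getMsbD i := by
  rw [cpl_eq_findIdx] at h
  simpa using List.not_of_lt_findIdx h

theorem getMsbD_cpl_ne (h : cpl x y < n) : x.getMsbD (cpl x y) ≠ y.getMsbD (cpl x y) := by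
  rw [cpl_eq_findIdx] at h ⊢
  simpa using List.findIdx_getElem (w := h.trans_eq List.length_range.symm)

theorem xorDist_lt_xorDist_of_cpl_lt (h : cpl x z < cpl y z) : xorDist y z < xorDist x z := by
  set c := cpl x z
  have hc : c < n := h.trans_le (cpl_le y z)
  have hx : (x ^^^ z).getMsbD c = true := by
    simpa [BitVec.getMsbD_xor] using getMsbD_cpl_ne hc
  have hy : ∀ i < c + 1, (y ^^^ z).getMsbD i = false := fun i hi => by
    simp [BitVec.getMsbD_xor, getMsbD_eq_of_lt_cpl (show i < cpl y z by omega)]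
  calc xorDist y z < 2 ^ (n - (c + 1)) := BitVec.toNat_lt_two_pow_of_getMsbD_eq_false hy
    _ = 2 ^ (n - 1 - c) := by rw [Nat.sub_sub, Nat.add_comm]
    _ ≤ xorDist x z := BitVec.two_pow_le_toNat_of_getMsbD_eq_true hx

end Cpl

theorem mem_closest_of_cpl_ge_general (P : Finset (BitVec 256))
    (key : BitVec 256) (S : Finset (BitVec 256))
    (hclosest : ∀ p ∈ S, ∀ q ∈ P, q ∉ S → xorDist p key < xorDist q key)
    (hS : S.Nonempty) (p : BitVec 256) (hp : p ∈ P)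
    (hcpl : S.inf' hS (fun q => cpl q key) + 1 ≤ cpl p key) :
    p ∈ S := by
  by_contra hpS
  obtain ⟨q, hqS, hq⟩ := S.exists_mem_eq_inf' hS fun q => cpl q key
  have hpq : xorDist p key < xorDist q key := xorDist_lt_xorDist_of_cpl_lt (by omega)
  exact (hclosest q hqS p hp hpS).asymm hpq

/-- Let `S` be the set of the `k` elements of `P` with smallest XOR distance to `key`
(`S ⊆ P`, `|S| = k`, and every element of `S` is strictly closer to `key` than every
element of `P \ S`), and let `CPL` be the minimum over `p ∈ S` of `cpl(p, key)`.
Then every `p ∈ P` with `cpl(p, key) ≥ CPL + 1` belongs to `S`. -/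
theorem mem_closest_of_cpl_ge (P : Finset (BitVec 256)) (k : ℕ) (hPk : k ≤ P.card)
    (key : BitVec 256) (S : Finset (BitVec 256)) (hSP : S ⊆ P) (hScard : S.card = k)
    (hclosest : ∀ p ∈ S, ∀ q ∈ P, q ∉ S → xorDist p key < xorDist q key)
    (hS : S.Nonempty) (p : BitVec 256) (hp : p ∈ P)
    (hcpl : S.inf' hS (fun q => cpl q key) + 1 ≤ cpl p key) :
    p ∈ S :=
  mem_closest_of_cpl_ge_general P key S hclosest hS p hp hcpl
end
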